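/- (Matrix form of Theorem 3.2.) Let N ≥ L ≥ 1, let T > 0 and 0 < μ_1 ≤ μ_2 ≤ ... ≤ μ_L. Let Φ be a real N × L matrix with orthonormal columns (Φᵀ Φ = I_L), let F be an invertible diagonal L × L matrix, let D = diag(d_1, ..., d_L) with d_i = exp(−μ_i T), and let J be an invertible L × L real matrix. Set A = Φ F J and Ã = Φ D F J, with columns y_1, ..., y_L and ỹ_1, ..., ỹ_L respectively (viewed as vectors in Euclidean space ℝ^N). Let V be a linear subspace of ℝ^N and let P denote the orthogonal projection onto V. Then (Σ_{j=1}^{L} ‖y_j − P y_j‖²) · (Σ_{j=1}^{L} ‖ỹ_j‖²) ≤ L · ‖J‖₂² · ‖J⁻¹‖₂² · exp(2 μ_L T) · (Σ_{j=1}^{L} ‖ỹ_j − P ỹ_j‖²) · (Σ_{j=1}^{L} ‖y_j‖²). -/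

import Mathlib

/-!
Since `D` is invertible, `A = Ã K` with `K = J⁻¹ D⁻¹ J`, so each residual `y_j - P y_j` is
`∑ₖ K_kj (ỹ_k - P ỹ_k)`. Cauchy–Schwarz bounds the projection error of `A` by `‖K‖_F²` times
that of `Ã`, and `‖K‖_F² ≤ L ‖K‖₂² ≤ L ‖J‖₂² ‖J⁻¹‖₂² exp(2 μ_L T)`. Finally `‖ỹ_j‖ ≤ ‖y_j‖`
because `Φ` is an isometry and `D` a contraction.
-/

set_option autoImplicit false

open Matrix
open scoped Matrix.Norms.L2Operator

namespace Matrix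

variable {l m n : Type*} [Fintype m]

theorem mul_diagonal_mul_eq_mul_diagonal_mul_mul_conj {R : Type*} [CommRing R] [Fintype n]
    [DecidableEq n] (Φ : Matrix l n R) {d e : n → R} (hde : ∀ i, d i * e i = 1) (f : n → R)
    {J : Matrix n n R} (hJ : IsUnit J) :
    Φ * diagonal f * J = Φ * diagonal d * diagonal f * J * (J⁻¹ * diagonal e * J) := by
  have hscale : diagonal d * diagonal f * diagonal e = diagonal f := by
    simp only [diagonal_mul_diagonal]
    congr 1; funext i
    rw [mul_right_comm, hde, one_mul]
  conv_lhs => rw [← hscale]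
  simp only [Matrix.mul_assoc, mul_nonsing_inv_cancel_left _ _ ((isUnit_iff_isUnit_det J).mp hJ)]

theorem l2_opNorm_mul_diagonal_mul_le [Fintype l] [DecidableEq m] [Fintype n] [DecidableEq n]
    (B : Matrix l m ℝ) (e : m → ℝ) (C : Matrix m n ℝ) :
    ‖B * diagonal e * C‖ ≤ ‖B‖ * ‖e‖ * ‖C‖ :=
  calc ‖B * diagonal e * C‖ ≤ ‖B * diagonal e‖ * ‖C‖ := l2_opNorm_mul _ _
    _ ≤ ‖B‖ * ‖e‖ * ‖C‖ := by
      gcongr; exact (l2_opNorm_mul _ _).trans_eq (by rw [l2_opNorm_diagonal])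

theorem sum_sq_apply_le_l2_opNorm_sq [Fintype n] [DecidableEq n] (K : Matrix m n ℝ) (j : n) :
    ∑ i, K i j ^ 2 ≤ ‖K‖ ^ 2 := by
  have hcol := K.l2_opNorm_mulVec (EuclideanSpace.single j 1)
  calc ∑ i, K i j ^ 2 = ‖(EuclideanSpace.equiv m ℝ).symm (K *ᵥ Pi.single j 1)‖ ^ 2 := by
        simp [EuclideanSpace.real_norm_sq_eq, mulVec_single]
    _ ≤ ‖K‖ ^ 2 := by gcongr; simpa using hcol

theorem sum_sum_sq_le_card_mul_l2_opNorm_sq [Fintype n] [DecidableEq n] (K : Matrix m n ℝ) :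
    ∑ j, ∑ i, K i j ^ 2 ≤ Fintype.card n * ‖K‖ ^ 2 := by
  simpa using Finset.sum_le_sum fun j (_ : j ∈ Finset.univ) => K.sum_sq_apply_le_l2_opNorm_sq j

theorem sum_sq_mul_apply_of_transpose_mul_self_eq_one [Fintype l] [DecidableEq m]
    {Φ : Matrix l m ℝ} (hΦ : Φᵀ * Φ = 1) (M : Matrix m n ℝ) (j : n) :
    ∑ i, (Φ * M) i j ^ 2 = ∑ k, M k j ^ 2 := by
  have hgram : (Φ * M)ᵀ * (Φ * M) = Mᵀ * M := by
    rw [transpose_mul, Matrix.mul_assoc, ← Matrix.mul_assoc Φᵀ, hΦ, Matrix.one_mul]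
  simpa only [mul_apply, transpose_apply, sq] using congrFun (congrFun hgram j) j

theorem sum_sq_diagonal_mul_apply_le [DecidableEq m] {d : m → ℝ} (hd : ∀ k, |d k| ≤ 1)
    (M : Matrix m n ℝ) (j : n) :
    ∑ k, (diagonal d * M) k j ^ 2 ≤ ∑ k, M k j ^ 2 := by
  refine Finset.sum_le_sum fun k _ => ?_
  rw [diagonal_mul, mul_pow]
  have : d k ^ 2 ≤ 1 := by simpa using sq_le_sq.mpr ((hd k).trans (abs_one).ge)
  nlinarith [sq_nonneg (M k j)]

theorem sum_sq_mul_diagonal_mul_apply_le [Fintype l] [DecidableEq m] {Φ : Matrix l m ℝ}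
    (hΦ : Φᵀ * Φ = 1) {d : m → ℝ} (hd : ∀ k, |d k| ≤ 1) (M : Matrix m n ℝ) (j : n) :
    ∑ i, (Φ * diagonal d * M) i j ^ 2 ≤ ∑ i, (Φ * M) i j ^ 2 := by
  simp only [Matrix.mul_assoc, sum_sq_mul_apply_of_transpose_mul_self_eq_one hΦ]
  exact sum_sq_diagonal_mul_apply_le hd M j

end Matrix

theorem sum_norm_sq_sum_smul_le {ι κ E : Type*} [Fintype ι] [Fintype κ]
    [SeminormedAddCommGroup E] [NormedSpace ℝ E] (K : Matrix κ ι ℝ) (s : κ → E) :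
    ∑ j, ‖∑ k, K k j • s k‖ ^ 2 ≤ (∑ j, ∑ k, K k j ^ 2) * ∑ k, ‖s k‖ ^ 2 := by
  rw [Finset.sum_mul]
  refine Finset.sum_le_sum fun j _ => ?_
  calc ‖∑ k, K k j • s k‖ ^ 2 ≤ (∑ k, |K k j| * ‖s k‖) ^ 2 := by
        gcongr
        simpa only [norm_smul, Real.norm_eq_abs] using
          norm_sum_le Finset.univ fun k => K k j • s k
    _ ≤ (∑ k, |K k j| ^ 2) * ∑ k, ‖s k‖ ^ 2 := Finset.sum_mul_sq_le_sq_mul_sq _ _ _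
    _ = (∑ k, K k j ^ 2) * ∑ k, ‖s k‖ ^ 2 := by simp only [sq_abs]

theorem sum_norm_sq_sub_orthogonalProjectionOnto_le {ι κ E : Type*} [Fintype ι] [Fintype κ]
    [NormedAddCommGroup E] [InnerProductSpace ℝ E] (V : Submodule ℝ E)
    [V.HasOrthogonalProjection] (K : Matrix κ ι ℝ) {y : ι → E} {ytil : κ → E}
    (hy : ∀ j, y j = ∑ k, K k j • ytil k) :
    ∑ j, ‖y j - V.orthogonalProjectionOnto (y j)‖ ^ 2 ≤
      (∑ j, ∑ k, K k j ^ 2) * ∑ k, ‖ytil k - V.orthogonalProjectionOnto (ytil k)‖ ^ 2 := by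
  simp_rw [← Submodule.starProjection_apply, ← Submodule.starProjection_orthogonal_val, hy,
    map_sum, map_smul]
  exact sum_norm_sq_sum_smul_le K _

namespace EuclideanSpace

theorem eq_sum_smul_of_apply_eq_mul_apply {m n l : Type*} [Fintype n]
    {B : Matrix m n ℝ} {K : Matrix n l ℝ} {y : l → EuclideanSpace ℝ m}
    {ytil : n → EuclideanSpace ℝ m} (hy : ∀ j i, y j i = (B * K) i j)
    (hytil : ∀ k i, ytil k i = B i k) (j : l) :
    y j = ∑ k, K k j • ytil k := by
  ext i
  simp [hy, hytil, mul_apply, mul_comm]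

theorem norm_sq_eq_sum_sq_of_apply_eq {m n : Type*} [Fintype m]
    {A : Matrix m n ℝ} {x : EuclideanSpace ℝ m} {j : n} (hx : ∀ i, x i = A i j) :
    ‖x‖ ^ 2 = ∑ i, A i j ^ 2 := by
  simp [EuclideanSpace.real_norm_sq_eq, hx]

end EuclideanSpace

/-- Matrix form of Theorem 3.2 (backward problem): with `D = diag(exp(−μ_i T))`,
`A = Φ F J`, `Ã = Φ D F J`, and `P` the orthogonal projection onto a subspace `V ⊆ ℝ^N`:
`(Σ_j ‖y_j − P y_j‖²)(Σ_j ‖ỹ_j‖²) ≤ L ‖J‖₂² ‖J⁻¹‖₂² exp(2 μ_L T)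
  (Σ_j ‖ỹ_j − P ỹ_j‖²)(Σ_j ‖y_j‖²)`. -/
theorem pod_projection_transfer_backward (N L : ℕ) (hL : 1 ≤ L)
    (T : ℝ) (hT : 0 < T) (μ : Fin L → ℝ) (hμmono : Monotone μ)
    (hμpos : 0 < μ ⟨0, by omega⟩)
    (Φ : Matrix (Fin N) (Fin L) ℝ) (hΦ : Φᵀ * Φ = 1)
    (f : Fin L → ℝ)
    (J : Matrix (Fin L) (Fin L) ℝ) (hJ : IsUnit J)
    (A Atil : Matrix (Fin N) (Fin L) ℝ)
    (hA : A = Φ * Matrix.diagonal f * J)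
    (hAtil : Atil = Φ * Matrix.diagonal (fun i => Real.exp (-μ i * T)) *
      Matrix.diagonal f * J)
    (y ytil : Fin L → EuclideanSpace ℝ (Fin N))
    (hy : ∀ j i, y j i = A i j) (hytil : ∀ j i, ytil j i = Atil i j)
    (V : Submodule ℝ (EuclideanSpace ℝ (Fin N))) :
    (∑ j, ‖y j - (Submodule.orthogonalProjection V (y j) : EuclideanSpace ℝ (Fin N))‖ ^ 2) *
        (∑ j, ‖ytil j‖ ^ 2) ≤
      (L : ℝ) * ‖Matrix.toEuclideanCLM (𝕜 := ℝ) J‖ ^ 2 *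
        ‖Matrix.toEuclideanCLM (𝕜 := ℝ) J⁻¹‖ ^ 2 *
        Real.exp (2 * μ ⟨L - 1, by omega⟩ * T) *
        (∑ j, ‖ytil j - (Submodule.orthogonalProjection V (ytil j) : EuclideanSpace ℝ (Fin N))‖ ^ 2) *
        (∑ j, ‖y j‖ ^ 2) := by
  set μmax := μ ⟨L - 1, by omega⟩
  have hμ_nonneg (k : Fin L) : 0 ≤ μ k :=
    hμpos.le.trans (hμmono (Fin.mk_le_of_le_val (Nat.zero_le _)))
  have hμ_le (k : Fin L) : μ k ≤ μmax :=
    hμmono (Fin.le_def.2 (by have := k.isLt; simp only; omega))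
  set K := J⁻¹ * diagonal (fun i => Real.exp (μ i * T)) * J
  have hAK : A = Atil * K := hA ▸ hAtil ▸ mul_diagonal_mul_eq_mul_diagonal_mul_mul_conj Φ
    (fun i => by rw [← Real.exp_add, neg_mul, neg_add_cancel, Real.exp_zero]) f hJ
  have hD : ‖fun i => Real.exp (μ i * T)‖ ≤ Real.exp (μmax * T) :=
    (pi_norm_le_iff_of_nonneg (Real.exp_pos _).le).2 fun k => by
      rw [Real.norm_of_nonneg (Real.exp_pos _).le]
      gcongr
      exact hμ_le k
  have hK : ‖K‖ ≤ ‖J⁻¹‖ * Real.exp (μmax * T) * ‖J‖ :=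
    (l2_opNorm_mul_diagonal_mul_le _ _ _).trans (by gcongr)
  have hres := sum_norm_sq_sub_orthogonalProjectionOnto_le V K
    (EuclideanSpace.eq_sum_smul_of_apply_eq_mul_apply (hAK ▸ hy) hytil)
  have hKsq : ∑ j, ∑ i, K i j ^ 2 ≤ L * ‖K‖ ^ 2 := by
    simpa using K.sum_sum_sq_le_card_mul_l2_opNorm_sq
  have hnorms : ∑ j, ‖ytil j‖ ^ 2 ≤ ∑ j, ‖y j‖ ^ 2 := Finset.sum_le_sum fun j _ => by
    rw [EuclideanSpace.norm_sq_eq_sum_sq_of_apply_eq (hytil j),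
      EuclideanSpace.norm_sq_eq_sum_sq_of_apply_eq (hy j), hA, hAtil,
      Matrix.mul_assoc (Φ * _), Matrix.mul_assoc Φ (diagonal f)]
    refine sum_sq_mul_diagonal_mul_apply_le hΦ (fun k => ?_) _ j
    rw [abs_of_pos (Real.exp_pos _), Real.exp_le_one_iff]
    nlinarith [hμ_nonneg k]
  calc _ ≤ ((L : ℝ) * (‖J⁻¹‖ * Real.exp (μmax * T) * ‖J‖) ^ 2 *
        ∑ j, ‖ytil j - V.orthogonalProjectionOnto (ytil j)‖ ^ 2) * ∑ j, ‖y j‖ ^ 2 := by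
        gcongr
        exact hres.trans (by gcongr; exact hKsq.trans (by gcongr))
    _ = _ := by
        rw [l2_opNorm_toEuclideanCLM, l2_opNorm_toEuclideanCLM, show 2 * μmax * T =
          μmax * T + μmax * T by ring, Real.exp_add]
        ring
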